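/- For any loopless finite graph G with n vertices and any real number q < 0, the chromatic polynomial satisfies (-1)^n P_G(q) > 0. -/

import Mathlib

open Finset Polynomial

/-- Number of connected components (including isolated vertices) of the spanning
subgraph of the multigraph with vertex type `V`, edge type `E`, endpoint map `ends`,
keeping only the edges in `E'`. -/
noncomputable def kcomp {V E : Type*} (ends : E → V × V) (E' : Finset E) : ℕ :=
  Nat.card (Quotient (Relation.EqvGen.setoid (fun a b : V =>
    ∃ e ∈ E', ends e = (a, b) ∨ ends e = (b, a))))

/-- The chromatic polynomial, via the Fortuin–Kasteleyn / Whitney expansion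
`P_G(q) = ∑_{E' ⊆ E} (-1)^{|E'|} q^{k(E')}`. -/
noncomputable def chromPoly {V E : Type*} [Fintype E] (ends : E → V × V) : Polynomial ℤ :=
  ∑ E' : Finset E, (-1 : ℤ) ^ E'.card • (X : Polynomial ℤ) ^ kcomp ends E'

/-!
Deletion–contraction: for a non-loop edge `e`, `P_G = P_{G - e} - P_{G / e}`, and `G / e` has one
vertex less, so `(-1)^n P_G(q) = (-1)^n P_{G - e}(q) + (-1)^{n-1} P_{G / e}(q)`. A graph with a loop
has `P = 0`, and the edgeless graph on `n` vertices has `(-1)^n q^n = (-q)^n > 0`, so induction on the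
number of edges gives positivity.
-/

open Relation

namespace Setoid
variable {α : Type*}

def merge (s : Setoid α) (x y : α) : Setoid α where
  r a b := s a b ∨ (s a x ∧ s y b) ∨ (s a y ∧ s x b)
  iseqv.refl a := Or.inl (s.refl a)
  iseqv.symm := by
    rintro a b (h | ⟨h₁, h₂⟩ | ⟨h₁, h₂⟩)
    · exact Or.inl (s.symm h)
    · exact Or.inr (Or.inr ⟨s.symm h₂, s.symm h₁⟩)
    · exact Or.inr (Or.inl ⟨s.symm h₂, s.symm h₁⟩)
  iseqv.trans := by
    have trans : ∀ {a b c}, s a b → s b c → s a c := s.trans'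
    have symm : ∀ {a b}, s a b → s b a := s.symm'
    rintro a b c (h | ⟨h₁, h₂⟩ | ⟨h₁, h₂⟩) (h' | ⟨h₁', h₂'⟩ | ⟨h₁', h₂'⟩) <;> grind

variable {s : Setoid α} {x y : α}

lemma le_merge : s ≤ s.merge x y := fun _ _ h => Or.inl h

lemma merge_rel : s.merge x y x y := Or.inr (Or.inl ⟨s.refl x, s.refl y⟩)

lemma merge_eq_self (h : s x y) : s.merge x y = s := by
  refine le_antisymm ?_ le_merge
  rintro a b (hab | ⟨h₁, h₂⟩ | ⟨h₁, h₂⟩)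
  · exact hab
  · exact s.trans (s.trans h₁ h) h₂
  · exact s.trans (s.trans h₁ (s.symm h)) h₂

lemma merge_eq_sup_eqvGen {r : α → α → Prop} (hxy : r x y)
    (hr : ∀ a b, r a b → (a = x ∧ b = y) ∨ (a = y ∧ b = x)) :
    s.merge x y = s ⊔ EqvGen.setoid r := by
  refine le_antisymm ?_ (sup_le le_merge (eqvGen_le ?_))
  · have hle : s ≤ s ⊔ EqvGen.setoid r := le_sup_left
    have hxy' : (s ⊔ EqvGen.setoid r) x y :=
      le_sup_right (a := s) (EqvGen.rel _ _ hxy)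
    rintro a b (hab | ⟨h₁, h₂⟩ | ⟨h₁, h₂⟩)
    · exact hle hab
    · exact (s ⊔ _).trans ((s ⊔ _).trans (hle h₁) hxy') (hle h₂)
    · exact (s ⊔ _).trans ((s ⊔ _).trans (hle h₁) ((s ⊔ _).symm hxy')) (hle h₂)
  · rintro a b hab
    rcases hr a b hab with ⟨rfl, rfl⟩ | ⟨rfl, rfl⟩
    · exact merge_rel
    · exact (s.merge _ _).symm merge_rel

lemma card_quotient_merge_add_one [Finite α] (h : ¬ s x y) :
    Nat.card (Quotient (s.merge x y)) + 1 = Nat.card (Quotient s) := by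
  set π : Quotient s → Quotient (s.merge x y) := map_of_le le_merge
  have hinj : Set.InjOn π {⟦y⟧}ᶜ := by
    intro c ha d hb hab
    induction c using Quotient.ind with | _ a => ?_
    induction d using Quotient.ind with | _ b => ?_
    simp only [Set.mem_compl_iff, Set.mem_singleton_iff, Quotient.eq] at ha hb
    rcases Quotient.exact hab with hab | ⟨-, hyb⟩ | ⟨hay, -⟩
    · exact Quotient.sound hab
    · exact absurd (s.symm hyb) hb
    · exact absurd hay ha
  have himage : π '' {⟦y⟧}ᶜ = Set.univ := by
    refine Set.eq_univ_of_forall fun c => ?_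
    induction c using Quotient.ind with | _ a => ?_
    by_cases hay : s a y
    · refine ⟨⟦x⟧, fun hxy => h (Quotient.exact hxy), Quotient.sound ?_⟩
      exact Or.inr (Or.inl ⟨s.refl x, s.symm hay⟩)
    · exact ⟨⟦a⟧, fun h' => hay (Quotient.exact h'), rfl⟩
  rw [← Set.ncard_univ, ← himage, hinj.ncard_image,
    ← Set.ncard_compl_add_ncard {⟦y⟧}, Set.ncard_singleton]

end Setoid

section Contraction

variable {V E : Type*} (ends : E → V × V)

def edgeRel (A : Finset E) (a b : V) : Prop :=
  ∃ e ∈ A, ends e = (a, b) ∨ ends e = (b, a)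

lemma edgeRel_insert [DecidableEq E] (e : E) (A : Finset E) :
    edgeRel ends (insert e A) = edgeRel ends {e} ⊔ edgeRel ends A := by
  ext a b
  simp [edgeRel]

lemma sup_eqvGen_edgeRel_singleton (s : Setoid V) (e : E) :
    s ⊔ EqvGen.setoid (edgeRel ends {e}) = s.merge (ends e).1 (ends e).2 := by
  refine (Setoid.merge_eq_sup_eqvGen ⟨e, mem_singleton_self e, Or.inl rfl⟩ ?_).symm
  rintro a b ⟨f, hf, hab | hab⟩ <;> rw [mem_singleton.1 hf] at hab <;> simp [hab]

/-- The chromatic polynomial of the multigraph on `V ⧸ s` with edge set `S`: contracting edges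
coarsens `s`, so the vertex type stays fixed. -/
noncomputable def chromPolyQuot (s : Setoid V) (S : Finset E) : ℤ[X] :=
  ∑ A ∈ S.powerset,
    (-1 : ℤ) ^ A.card • X ^ Nat.card (Quotient (s ⊔ EqvGen.setoid (edgeRel ends A)))

lemma chromPoly_eq_chromPolyQuot [Fintype E] : chromPoly ends = chromPolyQuot ends ⊥ univ := by
  simp only [chromPoly, chromPolyQuot, powerset_univ, bot_sup_eq]
  rfl

lemma chromPolyQuot_insert [DecidableEq E] (s : Setoid V) {e : E} {S : Finset E} (he : e ∉ S) :
    chromPolyQuot ends s (insert e S) =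
      chromPolyQuot ends s S - chromPolyQuot ends (s.merge (ends e).1 (ends e).2) S := by
  rw [chromPolyQuot, sum_powerset_insert he, chromPolyQuot, chromPolyQuot, sub_eq_add_neg,
    ← sum_neg_distrib]
  congr 1
  refine sum_congr rfl fun A hA => ?_
  have heA : e ∉ A := fun h => he (mem_powerset.1 hA h)
  rw [card_insert_of_notMem heA, edgeRel_insert, Setoid.gi.gc.l_sup, ← sup_assoc,
    sup_eqvGen_edgeRel_singleton, pow_succ, mul_neg_one, neg_zsmul]

lemma chromPolyQuot_eq_zero_of_loop {s : Setoid V} {e : E} {S : Finset E} (he : e ∈ S)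
    (hloop : s (ends e).1 (ends e).2) : chromPolyQuot ends s S = 0 := by
  classical
  rw [← insert_erase he, chromPolyQuot_insert ends s (notMem_erase e S),
    Setoid.merge_eq_self hloop, sub_self]

theorem neg_one_pow_mul_aeval_chromPolyQuot_pos [Finite V] {q : ℝ} (hq : q < 0) (S : Finset E)
    (s : Setoid V) (hS : ∀ e ∈ S, ¬ s (ends e).1 (ends e).2) :
    0 < (-1) ^ Nat.card (Quotient s) * aeval q (chromPolyQuot ends s S) := by
  classical
  induction S using Finset.induction_on generalizing s with
  | empty =>
    have hs : s ⊔ EqvGen.setoid (edgeRel ends (∅ : Finset E)) = s :=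
      sup_eq_left.2 (Setoid.eqvGen_le fun a b ⟨_, he, _⟩ => absurd he (notMem_empty _))
    simp only [chromPolyQuot, powerset_empty, sum_singleton, card_empty, pow_zero, one_zsmul,
      hs, map_pow, aeval_X, ← mul_pow]
    exact pow_pos (by linarith) _
  | insert e S he ih =>
    set s' := s.merge (ends e).1 (ends e).2
    have hcard := Setoid.card_quotient_merge_add_one (hS e (mem_insert_self e S))
    have hdel := ih s fun f hf => hS f (mem_insert_of_mem hf)
    have hcon : 0 ≤ (-1) ^ Nat.card (Quotient s') * aeval q (chromPolyQuot ends s' S) := by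
      by_cases hloop : ∃ f ∈ S, s' (ends f).1 (ends f).2
      · obtain ⟨f, hf, hf'⟩ := hloop
        simp [chromPolyQuot_eq_zero_of_loop ends hf hf']
      · exact (ih s' fun f hf hf' => hloop ⟨f, hf, hf'⟩).le
    have hsign : (-1 : ℝ) ^ Nat.card (Quotient s) = -(-1) ^ Nat.card (Quotient s') := by
      rw [← hcard, pow_succ, mul_neg_one]
    calc 0 < (-1) ^ Nat.card (Quotient s) * aeval q (chromPolyQuot ends s S) +
          (-1) ^ Nat.card (Quotient s') * aeval q (chromPolyQuot ends s' S) :=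
          add_pos_of_pos_of_nonneg hdel hcon
      _ = _ := by rw [chromPolyQuot_insert ends s he, map_sub, hsign]; ring

end Contraction

/-- For any loopless finite graph with `n` vertices and any real `q < 0`,
the chromatic polynomial satisfies `(-1)^n P_G(q) > 0`. -/
theorem chromPoly_neg_arg_pos {V E : Type*} [Fintype V] [Fintype E]
    (ends : E → V × V) (hloopless : ∀ e : E, (ends e).1 ≠ (ends e).2)
    (q : ℝ) (hq : q < 0) :
    0 < (-1 : ℝ) ^ (Fintype.card V) * (aeval q (chromPoly ends) : ℝ) := by
  have h := neg_one_pow_mul_aeval_chromPolyQuot_pos ends hq univ ⊥ fun e _ => hloopless e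
  rwa [← chromPoly_eq_chromPolyQuot, Nat.card_congr Setoid.quotientBotEquiv,
    Nat.card_eq_fintype_card] at h
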